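/- Equality of full and truncated s-expectations: Let γ ∈ {1,…,n} satisfy gcd(n, γ) = 1. Then for all sites i₁, …, iₙ ∈ Λ, the replica expectation of the product of n s-variables equals its truncated version: ⟨⟨ s^{(γ)}_{i₁} ⋯ s^{(γ)}_{iₙ} ⟩⟩_{Λ,β} = ⟨⟨ s^{(γ)}_{i₁} ⋯ s^{(γ)}_{iₙ} ⟩⟩^T_{Λ,β}. -/

import Mathlib

open scoped BigOperators Classical
noncomputable section

namespace IsingReplica

/-- Lattice sites in `ℤ^d`. -/
abbrev Site (d : ℕ) := Fin d → ℤ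

/-- `i` and `j` are nearest neighbors: `|i - j| = 1`. -/
def nn {d : ℕ} (i j : Site d) : Prop := (∑ k, |i k - j k|) = 1

instance {d : ℕ} (i j : Site d) : Decidable (nn i j) :=
  inferInstanceAs (Decidable ((∑ k, |i k - j k|) = 1))

/-- The spin values `{+1, -1}`. -/
abbrev SpinVal : Type := ↥({1, -1} : Finset ℤ)

/-- Spin configurations on a finite volume `Λ`. -/
abbrev Config {d : ℕ} (Λ : Finset (Site d)) : Type := {x // x ∈ Λ} → SpinVal

/-- The spin at a site, as a real number (extended by `+1` outside `Λ`). -/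
def spin {d : ℕ} {Λ : Finset (Site d)} (σ : Config Λ) (i : Site d) : ℝ :=
  if h : i ∈ Λ then ((σ ⟨i, h⟩ : ℤ) : ℝ) else 1

/-- The boundary sites of `Λ`: sites whose unit cube shares a `(d-1)`-face with the
topological boundary of the union of the closed unit cubes of `Λ`; equivalently,
sites of `Λ` having a nearest neighbor outside `Λ`. -/
def latBoundary {d : ℕ} (Λ : Finset (Site d)) : Finset (Site d) :=
  Λ.filter fun i => ∃ j, nn i j ∧ j ∉ Λ

/-- `+1` boundary conditions. -/
def PlusBC {d : ℕ} {Λ : Finset (Site d)} (σ : Config Λ) : Prop :=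
  ∀ i (h : i ∈ Λ), i ∈ latBoundary Λ → ((σ ⟨i, h⟩ : ℤ) = 1)

/-- The Ising Hamiltonian `H_Λ(σ) = Σ_{⟨i,j⟩} (1 - σ_i σ_j)`, the sum over unordered
nearest-neighbor pairs written as half the sum over ordered pairs. -/
def HΛ {d : ℕ} {Λ : Finset (Site d)} (σ : Config Λ) : ℝ :=
  (1 / 2) * ∑ i : {x // x ∈ Λ}, ∑ j : {x // x ∈ Λ},
    if nn i.1 j.1 then 1 - spin σ i.1 * spin σ j.1 else 0

/-- The partition function with `+1` boundary conditions. -/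
def Z {d : ℕ} (Λ : Finset (Site d)) (β : ℝ) : ℝ :=
  ∑ σ : Config Λ, if PlusBC σ then Real.exp (-β * HΛ σ) else 0

/-- The Gibbs expectation `⟨f⟩_{Λ,β}` with `+1` boundary conditions. -/
def gibbsExp {d : ℕ} (Λ : Finset (Site d)) (β : ℝ) (f : Config Λ → ℝ) : ℝ :=
  (Z Λ β)⁻¹ * ∑ σ : Config Λ, if PlusBC σ then f σ * Real.exp (-β * HΛ σ) else 0

/-- The set partitions of `{0, …, m-1}`: families of nonempty blocks such that every
element lies in exactly one block. -/
def partitions (m : ℕ) : Finset (Finset (Finset (Fin m))) :=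
  Finset.univ.filter fun P =>
    (∀ B ∈ P, B.Nonempty) ∧ ∀ x : Fin m, ∃! B, B ∈ P ∧ x ∈ B

/-- The truncated (connected) correlation
`⟨σ_{j 0} ⋯ σ_{j (m-1)}⟩^T = Σ_𝒫 (-1)^(|𝒫|-1) (|𝒫|-1)! ∏_{B ∈ 𝒫} ⟨∏_{k ∈ B} σ_{j k}⟩`. -/
def truncCorr {d : ℕ} (Λ : Finset (Site d)) (β : ℝ) {m : ℕ} (j : Fin m → Site d) : ℝ :=
  ∑ P ∈ partitions m,
    (-1 : ℝ) ^ (P.card - 1) * (Nat.factorial (P.card - 1) : ℝ) *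
      ∏ B ∈ P, gibbsExp Λ β fun σ => ∏ k ∈ B, spin σ (j k)

/-- `n`-replica configurations on `Λ`. -/
abbrev RConfig {d : ℕ} (Λ : Finset (Site d)) (n : ℕ) : Type :=
  {x // x ∈ Λ} → Fin n → SpinVal

/-- The replica component `σ^{(α)}` (the index `a : Fin n` encodes `α = a + 1`). -/
def comp {d n : ℕ} {Λ : Finset (Site d)} (σv : RConfig Λ n) (a : Fin n) : Config Λ :=
  fun i => σv i a

/-- `+1` boundary conditions in every replica component. -/
def RPlusBC {d n : ℕ} {Λ : Finset (Site d)} (σv : RConfig Λ n) : Prop :=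
  ∀ a, PlusBC (comp σv a)

/-- The replica Hamiltonian `H_rep(σ⃗) = Σ_α H_Λ(σ^{(α)})`. -/
def Hrep {d n : ℕ} {Λ : Finset (Site d)} (σv : RConfig Λ n) : ℝ :=
  ∑ a, HΛ (comp σv a)

/-- The spin of the replica component `α = a + 1` at site `i`. -/
def rspin {d n : ℕ} {Λ : Finset (Site d)} (σv : RConfig Λ n) (a : Fin n) (i : Site d) : ℝ :=
  spin (comp σv a) i

/-- `ω = e^{2πi/n}`, the primitive `n`-th root of unity. -/
def rootn (n : ℕ) : ℂ := Complex.exp (2 * Real.pi * Complex.I / n)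

/-- The replica Fourier variables
`s_i^{(γ)}(σ⃗) = n^{-1/2} Σ_{α'=1}^n ω^{γ(α'-1)} σ_i^{(α')}`
(the summation index `a : Fin n` encodes `α' = a + 1`). -/
def sVar {d n : ℕ} {Λ : Finset (Site d)} (γ : ℕ) (σv : RConfig Λ n) (i : Site d) : ℂ :=
  (Real.sqrt n : ℂ)⁻¹ * ∑ a : Fin n, rootn n ^ (γ * (a : ℕ)) * (rspin σv a i : ℂ)

/-- The replica expectation `⟨⟨F⟩⟩_{Λ,β} = Z^{-n} Σ_{σ⃗} F(σ⃗) e^{-β H_rep(σ⃗)}`. -/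
def rExp {d : ℕ} (Λ : Finset (Site d)) (β : ℝ) (n : ℕ) (F : RConfig Λ n → ℂ) : ℂ :=
  ((Z Λ β ^ n : ℝ) : ℂ)⁻¹ *
    ∑ σv : RConfig Λ n,
      if RPlusBC σv then F σv * Complex.exp (-(β : ℂ) * (Hrep σv : ℂ)) else 0

/-- The truncated replica expectation of `m` factors, defined by the partition formula. -/
def rTrunc {d : ℕ} (Λ : Finset (Site d)) (β : ℝ) (n : ℕ) {m : ℕ}
    (F : Fin m → RConfig Λ n → ℂ) : ℂ :=
  ∑ P ∈ partitions m,
    (-1 : ℂ) ^ (P.card - 1) * (Nat.factorial (P.card - 1) : ℂ) *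
      ∏ B ∈ P, rExp Λ β n fun σv => ∏ k ∈ B, F k σv

/-- Connectivity of `a` and `b` by a nearest-neighbor path inside the set `X`. -/
def connIn {d : ℕ} (X : Finset (Site d)) (a b : Site d) : Prop :=
  Relation.ReflTransGen (fun x y => x ∈ X ∧ y ∈ X ∧ nn x y) a b

/-- The sites of `Λ` where all replica components equal `+1`. -/
def onesSet {d n : ℕ} {Λ : Finset (Site d)} (σv : RConfig Λ n) : Finset (Site d) :=
  Λ.filter fun i => ∀ h : i ∈ Λ, ∀ a, ((σv ⟨i, h⟩ a : ℤ) = 1)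

/-- The replica sea: the part of the all-ones set connected to the boundary `∂Λ`. -/
def sea {d n : ℕ} {Λ : Finset (Site d)} (σv : RConfig Λ n) : Finset (Site d) :=
  (onesSet σv).filter fun i => ∃ j ∈ latBoundary Λ, connIn (onesSet σv) j i

/-- `K` is a continent of `σ⃗`: a connected component of `Λ \ 𝒮(σ⃗)`. -/
def IsContinent {d n : ℕ} {Λ : Finset (Site d)} (σv : RConfig Λ n)
    (K : Finset (Site d)) : Prop :=
  K.Nonempty ∧ K ⊆ Λ \ sea σv ∧
    (∀ a ∈ K, ∀ b ∈ K, connIn (Λ \ sea σv) a b) ∧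
    (∀ a ∈ K, ∀ b ∈ Λ \ sea σv, connIn (Λ \ sea σv) a b → b ∈ K)

/-- The local cyclic replica transformation `π_𝒦`: on sites of `K` it cyclically shifts
the replica index (`(π_𝒦 σ⃗)_i^{(α)} = σ_i^{(α-1)}`, indices mod `n`), elsewhere it is
the identity. -/
def piK {d n : ℕ} {Λ : Finset (Site d)} (K : Finset (Site d)) (σv : RConfig Λ n) :
    RConfig Λ n :=
  fun i a => if (i : Site d) ∈ K then σv i ⟨((a : ℕ) + n - 1) % n, Nat.mod_lt _ a.pos⟩ else σv i a

/-- The length of the shortest tree connecting the sites `i 0, …, i (m-1)`: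
the minimal number of edges of a connected subgraph of the nearest-neighbor graph
on `ℤ^d` whose vertex set contains all the given sites. -/
def treeLen {d m : ℕ} (i : Fin m → Site d) : ℕ :=
  sInf {r : ℕ | ∃ E : Finset (Site d × Site d),
    E.card = r ∧ (∀ e ∈ E, nn e.1 e.2) ∧
    ∀ x ∈ Finset.univ.image i ∪ E.image Prod.fst ∪ E.image Prod.snd,
      ∀ y ∈ Finset.univ.image i ∪ E.image Prod.fst ∪ E.image Prod.snd,
        Relation.ReflTransGen (fun a b => (a, b) ∈ E ∨ (b, a) ∈ E) x y}

/-- A face: the common `(d-1)`-face of the unit cubes centered at `c` and `c + e_k`,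
encoded by the pair `(c, k)`. -/
abbrev Face (d : ℕ) := Site d × Fin d

/-- The face `(c, k)` as a subset of `ℝ^d`. -/
def faceSet {d : ℕ} (F : Face d) : Set (Fin d → ℝ) :=
  {x | x F.2 = (F.1 F.2 : ℝ) + 1 / 2 ∧ ∀ j, j ≠ F.2 → |x j - (F.1 j : ℝ)| ≤ 1 / 2}

/-- Two faces are adjacent if they are distinct and their intersection contains a
`(d-2)`-dimensional unit cube. -/
def adjFace {d : ℕ} (F F' : Face d) : Prop :=
  F ≠ F' ∧ ∃ j₁ j₂ : Fin d, j₁ ≠ j₂ ∧ ∃ z : Fin d → ℝ,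
    {x : Fin d → ℝ | x j₁ = z j₁ ∧ x j₂ = z j₂ ∧
        ∀ j, j ≠ j₁ → j ≠ j₂ → z j ≤ x j ∧ x j ≤ z j + 1} ⊆ faceSet F ∩ faceSet F'

/-- Connectivity of faces by a chain of adjacent faces inside `Y`. -/
def faceConnIn {d : ℕ} (Y : Finset (Face d)) (A B : Face d) : Prop :=
  Relation.ReflTransGen (fun x y => x ∈ Y ∧ y ∈ Y ∧ adjFace x y) A B

/-- A connected surface. -/
def SurfConnected {d : ℕ} (Y : Finset (Face d)) : Prop :=
  ∀ F ∈ Y, ∀ F' ∈ Y, faceConnIn Y F F'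

/-- The `k`-th coordinate unit vector. -/
def unitVec {d : ℕ} (k : Fin d) : Site d := fun j => if j = k then 1 else 0

/-- The broken faces of a spin configuration: common faces of nearest-neighbor pairs
in `Λ` whose spins differ. -/
def brokenFaces {d : ℕ} {Λ : Finset (Site d)} (σ : Config Λ) : Finset (Face d) :=
  (Λ ×ˢ (Finset.univ : Finset (Fin d))).filter fun F =>
    F.1 + unitVec F.2 ∈ Λ ∧ spin σ F.1 ≠ spin σ (F.1 + unitVec F.2)

/-- The faces forming the topological boundary of the union of the unit cubes of `K`. -/
def bFaces {d : ℕ} (K : Finset (Site d)) : Finset (Face d) :=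
  ((K ×ˢ (Finset.univ : Finset (Fin d))).filter fun F => F.1 + unitVec F.2 ∉ K) ∪
    (((K ×ˢ (Finset.univ : Finset (Fin d))).image fun F => (F.1 - unitVec F.2, F.2)).filter
      fun F => F.1 ∉ K)

/-- The component `C^{(α)}(𝒦, σ⃗)` of the replica continent contour: the union of
those contours (connected components of broken faces) of `σ^{(α)}` sharing at least
one face with `∂𝒦`. -/
def contContour {d n : ℕ} {Λ : Finset (Site d)} (σv : RConfig Λ n) (K : Finset (Site d))
    (a : Fin n) : Finset (Face d) :=
  (brokenFaces (comp σv a)).filter fun F =>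
    ∃ F₀ ∈ brokenFaces (comp σv a), F₀ ∈ bFaces K ∧ faceConnIn (brokenFaces (comp σv a)) F₀ F

/-- `C(𝒦)`: the set of replica continent contours `C⃗(𝒦, σ⃗)` as `σ⃗` ranges over
`n`-replica configurations (with `+1` boundary conditions) having `𝒦` as a continent. -/
def contourSet {d : ℕ} (Λ : Finset (Site d)) (n : ℕ) (K : Finset (Site d)) :
    Set (Fin n → Finset (Face d)) :=
  {C | ∃ σv : RConfig Λ n, RPlusBC σv ∧ IsContinent σv K ∧ ∀ a, C a = contContour σv K a}

/-!
The cyclic relabelling of replicas `α ↦ α + 1` preserves the replica Gibbs weight and changes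
each `s^{(γ)}_i` only by the phase `ω^{γ}`, so a product of `m` such variables has vanishing
expectation unless `n ∣ γ m`. When `gcd(n, γ) = 1`, every block `B` of a partition of
`{1, …, n}` other than the one-block partition has `0 < |B| < n`, hence `n ∤ γ |B|`, so every
such partition contributes zero to the truncated expectation and only the full expectation remains.
-/

section PartitionsFin

variable {m : ℕ}

lemma singleton_univ_mem_partitions (hm : 0 < m) :
    ({Finset.univ} : Finset (Finset (Fin m))) ∈ partitions m := by
  simp only [partitions, Finset.mem_filter, Finset.mem_univ, Finset.mem_singleton, true_and,
    forall_eq]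
  exact ⟨Finset.univ_nonempty_iff.mpr ⟨⟨0, hm⟩⟩,
    fun x => ⟨Finset.univ, ⟨rfl, Finset.mem_univ x⟩, fun _ h => h.1⟩⟩

lemma eq_singleton_univ_of_univ_mem_partitions {P : Finset (Finset (Fin m))}
    (hP : P ∈ partitions m) (hu : Finset.univ ∈ P) : P = {Finset.univ} := by
  simp only [partitions, Finset.mem_filter, Finset.mem_univ, true_and] at hP
  obtain ⟨hne, hcover⟩ := hP
  refine Finset.eq_singleton_iff_unique_mem.mpr ⟨hu, fun B hB => ?_⟩
  obtain ⟨x, hx⟩ := hne B hB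
  exact (hcover x).unique ⟨hB, hx⟩ ⟨hu, Finset.mem_univ x⟩

end PartitionsFin

section Replicas

variable {d n : ℕ} {Λ : Finset (Site d)}

lemma rTrunc_eq_rExp_prod_of_proper_blocks_eq_zero {m : ℕ} (hm : 0 < m)
    {F : Fin m → RConfig Λ n → ℂ} {β : ℝ}
    (hF : ∀ B : Finset (Fin m), B.Nonempty → B ≠ Finset.univ →
      rExp Λ β n (fun σv => ∏ k ∈ B, F k σv) = 0) :
    rTrunc Λ β n F = rExp Λ β n (fun σv => ∏ k, F k σv) := by
  unfold rTrunc
  rw [Finset.sum_eq_single_of_mem _ (singleton_univ_mem_partitions hm)]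
  · simp
  intro P hP hPu
  have hblocks := hP
  simp only [partitions, Finset.mem_filter, Finset.mem_univ, true_and] at hblocks
  obtain ⟨B₀, ⟨hB₀, -⟩, -⟩ := hblocks.2 ⟨0, hm⟩
  obtain ⟨B, hB, hBu⟩ : ∃ B ∈ P, B ≠ Finset.univ := by
    by_contra! h
    exact hPu (eq_singleton_univ_of_univ_mem_partitions hP (h B₀ hB₀ ▸ hB₀))
  rw [Finset.prod_eq_zero hB (hF B (hblocks.1 B hB) hBu), mul_zero]

def permReplicas (π : Equiv.Perm (Fin n)) : RConfig Λ n ≃ RConfig Λ n where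
  toFun σv i a := σv i (π a)
  invFun σv i a := σv i (π.symm a)
  left_inv σv := by funext i a; simp
  right_inv σv := by funext i a; simp

lemma rspin_permReplicas (π : Equiv.Perm (Fin n)) (σv : RConfig Λ n) (a : Fin n) (i : Site d) :
    rspin (permReplicas π σv) a i = rspin σv (π a) i :=
  rfl

lemma RPlusBC_permReplicas (π : Equiv.Perm (Fin n)) (σv : RConfig Λ n) :
    RPlusBC (permReplicas π σv) ↔ RPlusBC σv :=
  π.forall_congr_right (q := fun a => PlusBC (comp σv a))

lemma Hrep_permReplicas (π : Equiv.Perm (Fin n)) (σv : RConfig Λ n) :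
    Hrep (permReplicas π σv) = Hrep σv :=
  Equiv.sum_comp π fun a => HΛ (comp σv a)

lemma rExp_comp_permReplicas (β : ℝ) (π : Equiv.Perm (Fin n)) (F : RConfig Λ n → ℂ) :
    rExp Λ β n (fun σv => F (permReplicas π σv)) = rExp Λ β n F := by
  unfold rExp
  refine congrArg _ (Fintype.sum_equiv (permReplicas π) _ _ fun σv => ?_)
  simp only [RPlusBC_permReplicas, Hrep_permReplicas]

lemma rExp_const_mul (β : ℝ) (c : ℂ) (F : RConfig Λ n → ℂ) :
    rExp Λ β n (fun σv => c * F σv) = c * rExp Λ β n F := by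
  simp only [rExp, Finset.mul_sum]
  refine Finset.sum_congr rfl fun σv _ => ?_
  split_ifs <;> ring

lemma rExp_eq_zero_of_eq_mul_comp_permReplicas {β : ℝ} {π : Equiv.Perm (Fin n)}
    {F : RConfig Λ n → ℂ} {c : ℂ} (hc : c ≠ 1)
    (hF : ∀ σv, F σv = c * F (permReplicas π σv)) :
    rExp Λ β n F = 0 := by
  have hfix : c * rExp Λ β n F = rExp Λ β n F := by
    rw [← rExp_comp_permReplicas β π F, ← rExp_const_mul, rExp_comp_permReplicas]
    exact congrArg _ (funext hF).symm
  by_contra h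
  exact hc ((mul_eq_right₀ h).mp hfix)

lemma pow_val_finRotate {M : Type*} [Monoid M] {ζ : M} (hζ : ζ ^ n = 1) (a : Fin n) :
    ζ ^ (finRotate n a : ℕ) = ζ ^ (a : ℕ) * ζ := by
  cases n with
  | zero => exact a.elim0
  | succ n =>
    rw [coe_finRotate]
    split_ifs with ha
    · rw [ha, Fin.val_last, ← pow_succ, hζ, pow_zero]
    · rw [pow_succ]

lemma isPrimitiveRoot_rootn [NeZero n] : IsPrimitiveRoot (rootn n) n :=
  Complex.isPrimitiveRoot_exp n (NeZero.ne n)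

lemma sVar_eq_rootn_pow_mul_sVar_finRotate [NeZero n] (γ : ℕ) (σv : RConfig Λ n) (i : Site d) :
    sVar γ σv i = rootn n ^ γ * sVar γ (permReplicas (finRotate n) σv) i := by
  have hζ : (rootn n ^ γ) ^ n = 1 := by
    rw [← pow_mul, mul_comm, pow_mul, isPrimitiveRoot_rootn.pow_eq_one, one_pow]
  unfold sVar
  rw [mul_left_comm]
  congr 1
  rw [Finset.mul_sum]
  refine (Fintype.sum_equiv (finRotate n) _ _ fun a => ?_).symm
  simp only [pow_mul]
  rw [pow_val_finRotate hζ, rspin_permReplicas]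
  ring

lemma rExp_prod_sVar_eq_zero [NeZero n] {ι : Type*} (β : ℝ) (γ : ℕ) (B : Finset ι)
    (j : ι → Site d) (hB : ¬ n ∣ γ * B.card) :
    rExp Λ β n (fun σv => ∏ k ∈ B, sVar γ σv (j k)) = 0 := by
  refine rExp_eq_zero_of_eq_mul_comp_permReplicas (π := finRotate n)
    (c := rootn n ^ (γ * B.card))
    (fun h => hB ((isPrimitiveRoot_rootn.pow_eq_one_iff_dvd _).mp h)) fun σv => ?_
  simp_rw [sVar_eq_rootn_pow_mul_sVar_finRotate γ σv]
  rw [Finset.prod_mul_distrib, Finset.prod_const, pow_mul]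

end Replicas

theorem full_equals_truncated_s_expectation_general (d : ℕ)
    (Λ : Finset (Site d)) (β : ℝ) (n : ℕ) (hn : 1 ≤ n)
    (γ : ℕ) (hgcd : Nat.gcd n γ = 1)
    (i : Fin n → Site d) :
    rExp Λ β n (fun σv => ∏ k, sVar γ σv (i k)) =
      rTrunc Λ β n (fun k σv => sVar γ σv (i k)) := by
  have : NeZero n := .of_pos hn
  refine (rTrunc_eq_rExp_prod_of_proper_blocks_eq_zero hn fun B hB hBu => ?_).symm
  refine rExp_prod_sVar_eq_zero β γ B i fun hdvd => ?_
  have hlt : B.card < n := by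
    simpa using Finset.card_lt_card (Finset.ssubset_univ_iff.mpr hBu)
  exact hlt.not_ge (Nat.le_of_dvd hB.card_pos (Nat.Coprime.dvd_of_dvd_mul_left hgcd hdvd))

/-- **Equality of full and truncated `s`-expectations.** If `γ ∈ {1, …, n}` with
`gcd(n, γ) = 1`, then for all sites `i 0, …, i (n-1) ∈ Λ`,
`⟨⟨ s^{(γ)}_{i 0} ⋯ s^{(γ)}_{i (n-1)} ⟩⟩_{Λ,β} = ⟨⟨ s^{(γ)}_{i 0} ⋯ s^{(γ)}_{i (n-1)} ⟩⟩^T_{Λ,β}`. -/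
theorem full_equals_truncated_s_expectation (d : ℕ) (hd : 2 ≤ d)
    (Λ : Finset (Site d)) (β : ℝ) (hβ : 0 < β) (n : ℕ) (hn : 1 ≤ n)
    (γ : ℕ) (hγ1 : 1 ≤ γ) (hγn : γ ≤ n) (hgcd : Nat.gcd n γ = 1)
    (i : Fin n → Site d) (hi : ∀ k, i k ∈ Λ) :
    rExp Λ β n (fun σv => ∏ k, sVar γ σv (i k)) =
      rTrunc Λ β n (fun k σv => sVar γ σv (i k)) :=
  full_equals_truncated_s_expectation_general d Λ β n hn γ hgcd i

end IsingReplica
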